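/- Let ζ ∈ ℂ be an n-th root of unity with ζ⁴ ≠ 1, and set g(z) = ζz + 1/(ζz). Then g(ℝ̂) is not a circle; equivalently, there is no linear fractional function λ ∈ ℂ(z) with λ ∘ g ∈ ℝ(z). -/

import Mathlib

open scoped Polynomial
open OnePoint

noncomputable section

/-- A rational function over `ℂ` has real coefficients (i.e. lies in `ℝ(z)`). -/
def RatFunc.IsReal (f : RatFunc ℂ) : Prop :=
  (∀ n, (f.num.coeff n).im = 0) ∧ (∀ n, (f.denom.coeff n).im = 0)

/-- A rational function is nonconstant. -/
def RatFunc.Nonconst (f : RatFunc ℂ) : Prop := ∀ c : ℂ, f ≠ RatFunc.C c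

/-- Composition `f ∘ g` of rational functions (substitution of `g` into `f`). -/
def RatFunc.comp' (f g : RatFunc ℂ) : RatFunc ℂ :=
  RatFunc.eval (algebraMap ℂ (RatFunc ℂ)) g f

/-- The map `Ĉ → Ĉ` induced by a rational function. -/
def sphereMap (f : RatFunc ℂ) : OnePoint ℂ → OnePoint ℂ :=
  fun p =>
    match p with
    | OnePoint.infty =>
        if f.denom.natDegree < f.num.natDegree then OnePoint.infty
        else ((f.num.coeff f.denom.natDegree / f.denom.coeff f.denom.natDegree : ℂ) : OnePoint ℂ)
    | (z : ℂ) =>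
        if f.denom.eval z = 0 then OnePoint.infty
        else ((f.num.eval z / f.denom.eval z : ℂ) : OnePoint ℂ)

/-- `ℝ̂ = ℝ ∪ {∞}` inside the Riemann sphere. -/
def realSphere : Set (OnePoint ℂ) :=
  insert OnePoint.infty (Set.range fun r : ℝ => ((r : ℂ) : OnePoint ℂ))

/-- A linear fractional (Möbius) rational function. -/
def IsMoebius (l : RatFunc ℂ) : Prop :=
  ∃ a b c d : ℂ, a * d - b * c ≠ 0 ∧
    l = (RatFunc.C a * RatFunc.X + RatFunc.C b) / (RatFunc.C c * RatFunc.X + RatFunc.C d)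

/-- A circle in the Riemann sphere: the image of `ℝ̂` under a Möbius function. -/
def IsCircle (S : Set (OnePoint ℂ)) : Prop :=
  ∃ l : RatFunc ℂ, IsMoebius l ∧ S = sphereMap l '' realSphere

/-!
For real `t ≠ 0` and `‖ζ‖ = 1` we have `g(t) = ζ t + ζ̄ / t`. Both claims say that some Möbius
map `(a, b, c, d)` with `ad - bc ≠ 0` sends all these points into `ℝ̂` (for the circle, take the
inverse `(d, -b, -c, a)` of `λ`), i.e. `Im ((a g(t) + b) * conj (c g(t) + d)) = 0` for all
such `t`. That quantity is a Laurent polynomial `α (t² + t⁻²) + β + A t + B / t`, so all four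
coefficients vanish. Since `ζ⁴ ≠ 1`, `ζ` is neither real nor purely imaginary, and the vanishing
of `A` and `B` then gives `a d̄ = b̄ c`; with `b d̄ ∈ ℝ` (from `β`) this forces `ad - bc = 0`.
-/

open ComplexConjugate

namespace Complex

lemma re_ne_zero_and_im_ne_zero_of_pow_four_ne_one {ζ : ℂ} (hζ : ‖ζ‖ = 1) (h4 : ζ ^ 4 ≠ 1) :
    ζ.re ≠ 0 ∧ ζ.im ≠ 0 := by
  have hns : ζ.re * ζ.re + ζ.im * ζ.im = 1 := by
    rw [← normSq_apply, normSq_eq_norm_sq, hζ, one_pow]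
  refine ⟨fun h => h4 ?_, fun h => h4 ?_⟩
  · have hsq : ζ ^ 2 = -1 := Complex.ext (by simp [sq, h] at hns ⊢; linarith) (by simp [sq, h])
    rw [show 4 = 2 * 2 from rfl, pow_mul, hsq]
    norm_num
  · have hsq : ζ ^ 2 = 1 := Complex.ext (by simp [sq, h] at hns ⊢; linarith) (by simp [sq, h])
    rw [show 4 = 2 * 2 from rfl, pow_mul, hsq, one_pow]

lemma im_mul_conj_eq_zero_of_eq_ofReal_mul {p q : ℂ} {x : ℝ} (h : p = x * q) :
    (p * conj q).im = 0 := by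
  rw [h, mul_assoc, mul_conj, ← ofReal_mul, ofReal_im]

lemma eq_conj_of_im_mul_add_eq_zero {ζ μ ν : ℂ} (hre : ζ.re ≠ 0) (him : ζ.im ≠ 0)
    (h₁ : (μ * ζ + ν * conj ζ).im = 0) (h₂ : (μ * conj ζ + ν * ζ).im = 0) : μ = conj ν := by
  simp only [add_im, mul_im, conj_re, conj_im] at h₁ h₂
  have hsum : (μ.im + ν.im) * ζ.re = 0 := by linear_combination (h₁ + h₂) / 2
  have hdiff : (μ.re - ν.re) * ζ.im = 0 := by linear_combination (h₁ - h₂) / 2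
  apply Complex.ext
  · simpa [sub_eq_zero] using (mul_eq_zero.mp hdiff).resolve_right him
  · simpa [add_eq_zero_iff_eq_neg] using (mul_eq_zero.mp hsum).resolve_right hre

lemma mul_sub_mul_eq_zero_of_conj {a b c d : ℂ} (hbd : b * conj d = conj b * d)
    (had : a * conj d = conj b * c) : a * d - b * c = 0 := by
  by_cases hd : d = 0
  · subst hd
    obtain rfl | rfl : b = 0 ∨ c = 0 := by simpa using had.symm
    all_goals simp
  · have : conj d * (a * d - b * c) = 0 := by linear_combination d * had - c * hbd
    exact (mul_eq_zero.mp this).resolve_left ((map_ne_zero _).mpr hd)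

end Complex

lemma laurent_coeffs_eq_zero {α β A B : ℝ}
    (h : ∀ t : ℝ, t ≠ 0 → α * (t ^ 2 + 1 / t ^ 2) + β + A * t + B / t = 0) :
    α = 0 ∧ β = 0 ∧ A = 0 ∧ B = 0 := by
  have h₁ := h 1 one_ne_zero
  have h₂ := h (-1) (by norm_num)
  have h₃ := h 2 two_ne_zero
  have h₄ := h (-2) (by norm_num)
  norm_num at h₁ h₂ h₃ h₄
  refine ⟨?_, ?_, ?_, ?_⟩ <;> linarith

open Polynomial

/-- For `‖ζ‖ = 1` this is `g(t) = ζ t + 1 / (ζ t)` at a real point `t`. -/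
def rotJoukowsky (ζ : ℂ) (t : ℝ) : ℂ := ζ * t + conj ζ / t

def rotJoukowskyNum (ζ : ℂ) : ℂ[X] := C ζ * X ^ 2 + C (conj ζ)

lemma eval_rotJoukowskyNum (ζ : ℂ) {t : ℝ} (ht : t ≠ 0) :
    (rotJoukowskyNum ζ).eval (t : ℂ) = t * rotJoukowsky ζ t := by
  simp only [rotJoukowskyNum, rotJoukowsky, eval_add, eval_mul, eval_pow, eval_C, eval_X]
  field_simp [Complex.ofReal_ne_zero.mpr ht]

lemma C_mul_X_add_inv_eq_div {ζ : ℂ} (hζ : ‖ζ‖ = 1) :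
    RatFunc.C ζ * RatFunc.X + (RatFunc.C ζ * RatFunc.X)⁻¹ =
      algebraMap ℂ[X] (RatFunc ℂ) (rotJoukowskyNum ζ) / algebraMap ℂ[X] (RatFunc ℂ) X := by
  have hζ0 : (RatFunc.C ζ : RatFunc ℂ) ≠ 0 := by simpa using norm_ne_zero_iff.mp (hζ ▸ one_ne_zero)
  simp only [rotJoukowskyNum, ← Complex.inv_eq_conj hζ, map_add, map_mul, map_pow, map_inv₀,
    RatFunc.algebraMap_C, RatFunc.algebraMap_X]
  field_simp [RatFunc.X_ne_zero]

lemma im_mul_conj_rotJoukowsky (ζ a b c d : ℂ) {t : ℝ} (ht : t ≠ 0) :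
    ((a * rotJoukowsky ζ t + b) * conj (c * rotJoukowsky ζ t + d)).im =
      (a * conj c).im * Complex.normSq ζ * (t ^ 2 + 1 / t ^ 2)
        + (2 * (a * conj c).im * (ζ * ζ).re + (b * conj d).im)
        + (a * conj d * ζ + b * conj c * conj ζ).im * t
        + (a * conj d * conj ζ + b * conj c * ζ).im / t := by
  simp only [rotJoukowsky, map_add, map_mul, map_div₀, Complex.conj_conj, Complex.conj_ofReal,
    Complex.mul_im, Complex.mul_re, Complex.add_im, Complex.add_re, Complex.div_im,
    Complex.div_re, Complex.conj_re, Complex.conj_im, Complex.normSq_apply, Complex.ofReal_re,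
    Complex.ofReal_im]
  field_simp
  ring

lemma mul_sub_mul_eq_zero_of_forall_im_eq_zero {ζ : ℂ} (hre : ζ.re ≠ 0) (him : ζ.im ≠ 0)
    {a b c d : ℂ}
    (h : ∀ t : ℝ, t ≠ 0 → ((a * rotJoukowsky ζ t + b) * conj (c * rotJoukowsky ζ t + d)).im = 0) :
    a * d - b * c = 0 := by
  obtain ⟨hα, hβ, hA, hB⟩ := laurent_coeffs_eq_zero fun t ht =>
    (im_mul_conj_rotJoukowsky ζ a b c d ht).symm.trans (h t ht)
  have hac : (a * conj c).im = 0 :=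
    (mul_eq_zero.mp hα).resolve_right (Complex.normSq_pos.mpr fun h0 => hre (by simp [h0])).ne'
  have hbd : (b * conj d).im = 0 := by simpa [hac] using hβ
  apply Complex.mul_sub_mul_eq_zero_of_conj
  · simpa [mul_comm] using (Complex.conj_eq_iff_im.mpr hbd).symm
  · simpa [mul_comm] using Complex.eq_conj_of_im_mul_add_eq_zero hre him hA hB

lemma Polynomial.conj_eval_ofReal {P : ℂ[X]} (hP : ∀ n, (P.coeff n).im = 0) (t : ℝ) :
    conj (P.eval (t : ℂ)) = P.eval (t : ℂ) := by
  have hmap : P.map (starRingEnd ℂ) = P := Polynomial.ext fun n => by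
    rw [coeff_map, Complex.conj_eq_iff_im.mpr (hP n)]
  rw [← eval_map_apply, hmap, Complex.conj_ofReal]

namespace RatFunc

variable {f : RatFunc ℂ} {p q : ℂ[X]}

lemma not_eval_num_eq_zero_and_eval_denom_eq_zero (z : ℂ) :
    ¬ (f.num.eval z = 0 ∧ f.denom.eval z = 0) := by
  rintro ⟨hnum, hdenom⟩
  obtain ⟨u, v, huv⟩ := f.isCoprime_num_denom
  simpa [hnum, hdenom] using congrArg (Polynomial.eval z) huv

lemma moebius_comp_div {N D : ℂ[X]} (hD : D ≠ 0) (a b c d : ℂ) :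
    (RatFunc.C a * (algebraMap ℂ[X] (RatFunc ℂ) N / algebraMap ℂ[X] (RatFunc ℂ) D) + RatFunc.C b) /
        (RatFunc.C c * (algebraMap ℂ[X] (RatFunc ℂ) N / algebraMap ℂ[X] (RatFunc ℂ) D)
          + RatFunc.C d) =
      algebraMap ℂ[X] (RatFunc ℂ) (Polynomial.C a * N + Polynomial.C b * D) /
        algebraMap ℂ[X] (RatFunc ℂ) (Polynomial.C c * N + Polynomial.C d * D) := by
  have hD' := RatFunc.algebraMap_ne_zero hD
  have hnum (u v : ℂ) : RatFunc.C u * (algebraMap ℂ[X] (RatFunc ℂ) N / algebraMap ℂ[X] (RatFunc ℂ) D)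
      + RatFunc.C v = algebraMap ℂ[X] (RatFunc ℂ) (Polynomial.C u * N + Polynomial.C v * D) /
        algebraMap ℂ[X] (RatFunc ℂ) D := by
    simp only [map_add, map_mul, RatFunc.algebraMap_C]
    field_simp
  rw [hnum, hnum, div_div_div_cancel_right₀ hD']

section

variable (hq : q ≠ 0) (hf : f = algebraMap ℂ[X] (RatFunc ℂ) p / algebraMap ℂ[X] (RatFunc ℂ) q)
include hq hf

lemma eval_num_mul_eval_eq (z : ℂ) : f.num.eval z * q.eval z = p.eval z * f.denom.eval z := by
  simpa using congrArg (Polynomial.eval z) ((num_mul_eq_mul_denom_iff hq).mpr hf)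

lemma sphereMap_coe_of_eval_ne_zero {z : ℂ} (hz : q.eval z ≠ 0) :
    sphereMap f z = ((p.eval z / q.eval z : ℂ) : OnePoint ℂ) := by
  have hnq := eval_num_mul_eval_eq hq hf z
  have hdenom : f.denom.eval z ≠ 0 := fun h0 =>
    not_eval_num_eq_zero_and_eval_denom_eq_zero z ⟨by simpa [h0, hz] using hnq, h0⟩
  simp only [sphereMap, if_neg hdenom, OnePoint.coe_eq_coe]
  rw [div_eq_div_iff hdenom hz]
  linear_combination hnq

lemma eval_eq_mul_eval_of_sphereMap_coe_eq {z w : ℂ} (hw : sphereMap f z = w) :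
    p.eval z = w * q.eval z := by
  simp only [sphereMap] at hw
  split_ifs at hw with hdenom
  · exact absurd hw (by simp)
  rw [OnePoint.coe_eq_coe, div_eq_iff hdenom] at hw
  apply mul_right_cancel₀ hdenom
  linear_combination (eval_num_mul_eval_eq hq hf z).symm + q.eval z * hw

lemma coeff_eq_mul_coeff_of_sphereMap_infty_eq {k : ℕ} (hp : p.natDegree ≤ k)
    (hqk : q.natDegree ≤ k) {w : ℂ} (hw : sphereMap f ∞ = w) : p.coeff k = w * q.coeff k := by
  simp only [sphereMap] at hw
  split_ifs at hw with hdeg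
  · exact absurd hw (by simp)
  rw [f.monic_denom.coeff_natDegree, div_one, OnePoint.coe_eq_coe] at hw
  have hcoeff := congrArg (Polynomial.coeff · (f.denom.natDegree + k))
    ((num_mul_eq_mul_denom_iff hq).mpr hf)
  rw [Polynomial.coeff_mul_add_eq_of_natDegree_le (not_lt.mp hdeg) hqk, add_comm,
    Polynomial.coeff_mul_add_eq_of_natDegree_le hp le_rfl, f.monic_denom.coeff_natDegree,
    hw] at hcoeff
  linear_combination -hcoeff

lemma im_eval_mul_conj_eval_eq_zero (hreal : f.IsReal) (t : ℝ) :
    (p.eval (t : ℂ) * conj (q.eval (t : ℂ))).im = 0 := by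
  have hnq := eval_num_mul_eval_eq hq hf t
  have hconj := congrArg conj hnq
  rw [map_mul, map_mul, Polynomial.conj_eval_ofReal hreal.1,
    Polynomial.conj_eval_ofReal hreal.2] at hconj
  set δ := p.eval (t : ℂ) * conj (q.eval (t : ℂ)) - conj (p.eval (t : ℂ)) * q.eval (t : ℂ)
  -- `f.num (t)` and `f.denom (t)` both annihilate `δ` and cannot vanish together
  have hδ : δ = 0 := by
    by_contra hδ
    refine not_eval_num_eq_zero_and_eval_denom_eq_zero (f := f) t ⟨?_, ?_⟩
    · refine (mul_eq_zero.mp (?_ : f.num.eval (t : ℂ) * δ = 0)).resolve_right hδ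
      linear_combination p.eval (t : ℂ) * hconj - conj (p.eval (t : ℂ)) * hnq
    · refine (mul_eq_zero.mp (?_ : f.denom.eval (t : ℂ) * δ = 0)).resolve_right hδ
      linear_combination q.eval (t : ℂ) * hconj - conj (q.eval (t : ℂ)) * hnq
  rw [← Complex.conj_eq_iff_im, map_mul, Complex.conj_conj]
  linear_combination -hδ

end

end RatFunc

lemma coe_rotJoukowsky_mem_image_realSphere {ζ : ℂ} {t : ℝ} (ht : t ≠ 0) :
    (rotJoukowsky ζ t : OnePoint ℂ) ∈ sphereMap (algebraMap ℂ[X] (RatFunc ℂ) (rotJoukowskyNum ζ) /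
      algebraMap ℂ[X] (RatFunc ℂ) X) '' realSphere := by
  have ht' : (t : ℂ) ≠ 0 := Complex.ofReal_ne_zero.mpr ht
  refine ⟨(t : ℂ), Or.inr ⟨t, rfl⟩, ?_⟩
  rw [RatFunc.sphereMap_coe_of_eval_ne_zero X_ne_zero rfl (by simpa using ht'),
    eval_rotJoukowskyNum ζ ht, eval_X, mul_div_cancel_left₀ _ ht']

lemma im_mul_conj_eq_zero_of_mem_image_realSphere {a b c d w : ℂ} (hdet : a * d - b * c ≠ 0)
    (hw : (w : OnePoint ℂ) ∈ sphereMap ((RatFunc.C a * RatFunc.X + RatFunc.C b) /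
      (RatFunc.C c * RatFunc.X + RatFunc.C d)) '' realSphere) :
    ((d * w - b) * conj (a - c * w)).im = 0 := by
  have hq : C c * X + C d ≠ 0 := by
    intro h0
    have hc := congrArg (coeff · 1) h0
    have hd := congrArg (coeff · 0) h0
    simp only [coeff_add, coeff_C_mul_X, coeff_C, coeff_zero, ↓reduceIte, one_ne_zero, zero_ne_one,
      add_zero, zero_add] at hc hd
    simp [hc, hd] at hdet
  have hf : (RatFunc.C a * RatFunc.X + RatFunc.C b) / (RatFunc.C c * RatFunc.X + RatFunc.C d) =
      algebraMap ℂ[X] (RatFunc ℂ) (C a * X + C b) /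
        algebraMap ℂ[X] (RatFunc ℂ) (C c * X + C d) := by
    simp
  obtain ⟨s, rfl | ⟨r, rfl⟩, hsw⟩ := hw
  · have hac := RatFunc.coeff_eq_mul_coeff_of_sphereMap_infty_eq hq hf (k := 1)
      (by compute_degree) (by compute_degree) hsw
    simp only [coeff_add, coeff_C_mul_X, coeff_C, ↓reduceIte, one_ne_zero, add_zero] at hac
    rw [hac, mul_comm w c, sub_self, map_zero, mul_zero, Complex.zero_im]
  · have hr := RatFunc.eval_eq_mul_eval_of_sphereMap_coe_eq hq hf hsw
    simp only [eval_add, eval_mul, eval_C, eval_X] at hr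
    exact Complex.im_mul_conj_eq_zero_of_eq_ofReal_mul (x := r) (by linear_combination -hr)

lemma im_mul_conj_rotJoukowsky_eq_zero_of_isReal {ζ : ℂ} (hζ : ζ ≠ 0) {a b c d : ℂ}
    (hdet : a * d - b * c ≠ 0)
    (hreal : (algebraMap ℂ[X] (RatFunc ℂ) (C a * rotJoukowskyNum ζ + C b * X) /
      algebraMap ℂ[X] (RatFunc ℂ) (C c * rotJoukowskyNum ζ + C d * X)).IsReal)
    {t : ℝ} (ht : t ≠ 0) :
    ((a * rotJoukowsky ζ t + b) * conj (c * rotJoukowsky ζ t + d)).im = 0 := by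
  have hQ : C c * rotJoukowskyNum ζ + C d * X ≠ 0 := by
    intro h0
    have hc := congrArg (coeff · 2) h0
    have hd := congrArg (coeff · 1) h0
    simp only [rotJoukowskyNum, coeff_add, coeff_C_mul, coeff_X_pow, coeff_C, coeff_X,
      coeff_zero] at hc hd
    norm_num [hζ] at hc hd
    simp [hc, hd] at hdet
  have hfactor : (a * (t * rotJoukowsky ζ t) + b * t) * conj (c * (t * rotJoukowsky ζ t) + d * t)
      = ((t ^ 2 : ℝ) : ℂ) * ((a * rotJoukowsky ζ t + b) * conj (c * rotJoukowsky ζ t + d)) := by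
    simp only [map_add, map_mul, Complex.conj_ofReal]
    push_cast
    ring
  have h := RatFunc.im_eval_mul_conj_eval_eq_zero hQ rfl hreal t
  simp only [eval_add, eval_mul, eval_C, eval_X, eval_rotJoukowskyNum ζ ht, hfactor,
    Complex.im_ofReal_mul] at h
  exact (mul_eq_zero.mp h).resolve_left (pow_ne_zero 2 ht)

/-- **Example (Pakovich/Eremenko).** If ζ is an n-th root of unity with ζ⁴ ≠ 1, then for
g(z) = ζz + 1/(ζz) the curve g(ℝ̂) is not a circle; equivalently, there is no linear
fractional λ ∈ ℂ(z) with λ ∘ g ∈ ℝ(z). -/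
theorem chebyshev_example_not_circle (n : ℕ) (hn : 0 < n) (ζ : ℂ) (hζ : ζ ^ n = 1)
    (h4 : ζ ^ 4 ≠ 1) :
    ¬ IsCircle (sphereMap (RatFunc.C ζ * RatFunc.X + (RatFunc.C ζ * RatFunc.X)⁻¹) ''
        realSphere) ∧
    ¬ ∃ a b c d : ℂ, a * d - b * c ≠ 0 ∧
      ((RatFunc.C a * (RatFunc.C ζ * RatFunc.X + (RatFunc.C ζ * RatFunc.X)⁻¹) + RatFunc.C b) /
       (RatFunc.C c * (RatFunc.C ζ * RatFunc.X + (RatFunc.C ζ * RatFunc.X)⁻¹) +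
        RatFunc.C d)).IsReal := by
  have hnorm : ‖ζ‖ = 1 := Complex.norm_eq_one_of_pow_eq_one hζ hn.ne'
  obtain ⟨hre, him⟩ := Complex.re_ne_zero_and_im_ne_zero_of_pow_four_ne_one hnorm h4
  rw [C_mul_X_add_inv_eq_div hnorm]
  constructor
  · rintro ⟨l, ⟨a, b, c, d, hdet, rfl⟩, hS⟩
    suffices ∀ t : ℝ, t ≠ 0 →
        ((d * rotJoukowsky ζ t + -b) * conj (-c * rotJoukowsky ζ t + a)).im = 0 from
      hdet (by linear_combination mul_sub_mul_eq_zero_of_forall_im_eq_zero hre him this)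
    intro t ht
    simpa [sub_eq_add_neg, add_comm] using im_mul_conj_eq_zero_of_mem_image_realSphere hdet
      (hS ▸ coe_rotJoukowsky_mem_image_realSphere ht)
  · rintro ⟨a, b, c, d, hdet, hreal⟩
    rw [RatFunc.moebius_comp_div X_ne_zero] at hreal
    have hζ0 : ζ ≠ 0 := norm_ne_zero_iff.mp (hnorm ▸ one_ne_zero)
    exact hdet (mul_sub_mul_eq_zero_of_forall_im_eq_zero hre him fun t ht =>
      im_mul_conj_rotJoukowsky_eq_zero_of_isReal hζ0 hdet hreal ht)

end
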